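/- Let T : Z/2^M → Z/2^M be any permutation with a single cycle, and for each z ∈ Z/2^M let H_z : Z_2 → Z_2 satisfy: (1) δ_i(H_z(x)) ≡ δ_i(x) + ρ_i(z; x) (mod 2) where ρ_i depends only on δ_0(x),...,δ_{i-1}(x) (and on the bits of z), with ρ_0 independent of x; (2) ∑_{z=0}^{2^M−1} ρ_0(z) ≡ 1 (mod 2); (3) ∑_{z=0}^{2^M−1} ∑_{x=0}^{2^i−1} ρ_i(z; x) ≡ 1 (mod 2) for all i ≥ 1. Then the mapping W(x) = T(x mod 2^M) + 2^M · H_{x mod 2^M}(⌊x/2^M⌋) is transitive modulo 2^k for all k ≥ M, i.e., induces a single-cycle permutation of Z/2^k. -/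

import Mathlib

open scoped BigOperators

/-- The `j`-th binary digit of a 2-adic integer, as an element of `ZMod 2`. -/
noncomputable def bit2 (j : ℕ) (x : ℤ_[2]) : ZMod 2 := ((x.appr (j+1) / 2^j : ℕ) : ZMod 2)

/-- Compatibility = 1-Lipschitz w.r.t. the 2-adic metric. -/
def Compatible (f : ℤ_[2] → ℤ_[2]) : Prop := ∀ x y : ℤ_[2], ‖f x - f y‖ ≤ ‖x - y‖

/-- Reduction of a 2-adic integer modulo `2^n`. -/
noncomputable def padMod (n : ℕ) (x : ℤ_[2]) : ZMod (2^n) := (x.appr n : ZMod (2^n))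

/-- The map induced by `f : ℤ₂ → ℤ₂` on `ZMod (2^n)` (via canonical lifts). -/
noncomputable def inducedMap (n : ℕ) (f : ℤ_[2] → ℤ_[2]) : ZMod (2^n) → ZMod (2^n) :=
  fun a => padMod n (f ((a.val : ℕ) : ℤ_[2]))

/-- A self-map of a set is a single cycle (transitive on points). -/
def IsSingleCycle {α : Type*} (g : α → α) : Prop := ∀ a b : α, ∃ k : ℕ, g^[k] a = b

/-- Measure preservation: `f` induces a bijection modulo `2^n` for every `n`. -/
def MeasurePreservingZ (f : ℤ_[2] → ℤ_[2]) : Prop := ∀ n : ℕ, Function.Bijective (inducedMap n f)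

/-- Ergodicity: `f` induces a single-cycle permutation modulo `2^n` for every `n`. -/
def ErgodicZ (f : ℤ_[2] → ℤ_[2]) : Prop := ∀ n : ℕ, IsSingleCycle (inducedMap n f)

/-- Induced map modulo `2^n` of an `m`-variate map on `(ℤ₂)^m`. -/
noncomputable def inducedMapM (m n : ℕ) (G : (Fin m → ℤ_[2]) → Fin m → ℤ_[2]) :
    (Fin m → ZMod (2^n)) → Fin m → ZMod (2^n) :=
  fun a j => padMod n (G (fun i => (((a i).val : ℕ) : ℤ_[2])) j)

/-- Coordinatewise compatibility of an `m`-variate map. -/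
def CompatibleM (m : ℕ) (G : (Fin m → ℤ_[2]) → Fin m → ℤ_[2]) : Prop :=
  ∀ (n : ℕ) (x y : Fin m → ℤ_[2]), (∀ i, padMod n (x i) = padMod n (y i)) →
    ∀ j, padMod n (G x j) = padMod n (G y j)

/-- Ergodicity of an `m`-variate map: single cycle modulo `2^n` for all `n`. -/
def ErgodicM (m : ℕ) (G : (Fin m → ℤ_[2]) → Fin m → ℤ_[2]) : Prop :=
  ∀ n : ℕ, IsSingleCycle (inducedMapM m n G)

/-- The 2-adic integer with prescribed binary digits. -/
noncomputable def ofBits (b : ℕ → ZMod 2) : ℤ_[2] := ∑' i : ℕ, ((b i).val : ℤ_[2]) * 2^i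

/-- Bitwise XOR of 2-adic integers. -/
noncomputable def xor2 (x y : ℤ_[2]) : ℤ_[2] := ofBits (fun i => bit2 i x + bit2 i y)

/-- Bitwise AND of 2-adic integers. -/
noncomputable def and2 (x y : ℤ_[2]) : ℤ_[2] := ofBits (fun i => bit2 i x * bit2 i y)

/-- Bitwise AND of a list, the empty AND being `-1` (the all-ones string). -/
noncomputable def andL (l : List ℤ_[2]) : ℤ_[2] := l.foldr and2 (-1)

/-!
Induction on `k ≥ M`; modulo `2 ^ M` the map `W` induces `T`. Write a residue modulo `2 ^ (n + 1)`
as a residue modulo `2 ^ n` together with its bit `n`. Because `H_z` changes bit `i` by `ρ_i`, which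
only sees lower bits, `W` is compatible, and modulo `2 ^ (n + 1)` it becomes a skew product: the
residue modulo `2 ^ n` moves by `W mod 2 ^ n` and bit `n` is flipped by `ρ_{n-M}`, a function of
that residue. Going once around the cycle of `W mod 2 ^ n` flips bit `n` by the sum of `ρ_{n-M}`
over all residues, which is `1` by (2) and (3), so the skew product is again a single cycle.
-/

open Finset Function PadicInt

theorem Nat.add_mul_eq_add_mul_iff_of_lt {m z z' x x' : ℕ} (hz : z < m) (hz' : z' < m) :
    z + m * x = z' + m * x' ↔ z = z' ∧ x = x' := by
  refine ⟨fun h => ?_, by rintro ⟨rfl, rfl⟩; rfl⟩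
  have hm : 0 < m := by omega
  have hmod := congrArg (· % m) h
  have hdiv := congrArg (· / m) h
  simp only [Nat.add_mul_mod_self_left, Nat.mod_eq_of_lt hz, Nat.mod_eq_of_lt hz',
    Nat.add_mul_div_left _ _ hm, Nat.div_eq_of_lt hz, Nat.div_eq_of_lt hz', zero_add] at hmod hdiv
  exact ⟨hmod, hdiv⟩

theorem ZMod.sum_eq_sum_fin_add_mul {R : Type*} [AddCommMonoid R] {m n N : ℕ} [NeZero N]
    (hN : m * n = N) (f : ZMod N → R) :
    ∑ a, f a = ∑ z : Fin m, ∑ x : Fin n, f ((z + m * x : ℕ) : ZMod N) := by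
  rw [← Fintype.sum_prod_type']
  refine (Fintype.sum_bijective (fun p : Fin m × Fin n => ((p.1 + m * p.2 : ℕ) : ZMod N)) ?_ _ _
    fun _ => rfl).symm
  rw [Fintype.bijective_iff_injective_and_card, ZMod.card, Fintype.card_prod, Fintype.card_fin,
    Fintype.card_fin]
  refine ⟨fun ⟨z, x⟩ ⟨z', x'⟩ h => ?_, hN⟩
  have hlt : ∀ (z : Fin m) (x : Fin n), (z : ℕ) + m * x < N := fun z x =>
    hN ▸ Nat.add_mul_lt_mul_of_lt_of_lt z.isLt x.isLt
  rw [ZMod.natCast_eq_natCast_iff', Nat.mod_eq_of_lt (hlt z x), Nat.mod_eq_of_lt (hlt z' x'),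
    Nat.add_mul_eq_add_mul_iff_of_lt z.isLt z'.isLt] at h
  simp [Fin.ext_iff, h]

namespace IsSingleCycle

variable {α β : Type*}

theorem of_semiconj {f : α → α} {F : β → β} {e : α → β} (he : Injective e)
    (hsemi : Semiconj e f F) (hF : IsSingleCycle F) : IsSingleCycle f := by
  intro a b
  obtain ⟨k, hk⟩ := hF (e a) (e b)
  exact ⟨k, he <| by rw [(hsemi.iterate_right k).eq, hk]⟩

variable {g : α → α}

theorem mem_periodicPts (hg : IsSingleCycle g) (a : α) : a ∈ periodicPts g := by
  obtain ⟨k, hk⟩ := hg (g a) a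
  exact mk_mem_periodicPts k.succ_pos (by rwa [IsPeriodicPt, IsFixedPt, iterate_succ_apply])

theorem sum_range_minimalPeriod [Fintype α] {M : Type*} [AddCommMonoid M] (hg : IsSingleCycle g)
    (φ : α → M) (a : α) :
    ∑ j ∈ range (minimalPeriod g a), φ (g^[j] a) = ∑ b, φ b := by
  have hpos := minimalPeriod_pos_of_mem_periodicPts (hg.mem_periodicPts a)
  refine sum_nbij (g^[·] a) (fun _ _ => mem_univ _) ?_ ?_ (fun _ _ => rfl)
  · simpa [Set.InjOn] using (iterate_injOn_Iio_minimalPeriod (f := g) (x := a))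
  · intro b _
    obtain ⟨k, rfl⟩ := hg a b
    exact ⟨k % minimalPeriod g a, by simpa using Nat.mod_lt k hpos, iterate_mod_minimalPeriod_eq⟩

theorem skewProduct [Fintype α] (hg : IsSingleCycle g) {β : α → ZMod 2} (hβ : ∑ a, β a = 1) :
    IsSingleCycle (fun p : α × ZMod 2 => (g p.1, p.2 + β p.1)) := by
  set F := fun p : α × ZMod 2 => (g p.1, p.2 + β p.1)
  have hiterate : ∀ k p, F^[k] p = (g^[k] p.1, p.2 + ∑ j ∈ range k, β (g^[j] p.1)) := by
    intro k
    induction k with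
    | zero => simp
    | succ k ih => intro p; simp [F, iterate_succ_apply', ih, sum_range_succ, add_assoc]
  have hperiod : ∀ b t, F^[minimalPeriod g b] (b, t) = (b, t + 1) := by
    intro b t
    rw [hiterate, iterate_minimalPeriod, hg.sum_range_minimalPeriod, hβ]
  rintro ⟨a, s⟩ ⟨b, s'⟩
  obtain ⟨k, rfl⟩ := hg a b
  set u := s + ∑ j ∈ range k, β (g^[j] a)
  have hk : F^[k] (a, s) = (g^[k] a, u) := hiterate k (a, s)
  by_cases hu : u = s'
  · exact ⟨k, by rw [hk, hu]⟩
  · refine ⟨minimalPeriod g (g^[k] a) + k, ?_⟩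
    have : u + 1 = s' := (by decide : ∀ u s' : ZMod 2, u ≠ s' → u + 1 = s') u s' hu
    rw [iterate_add_apply, hk, hperiod, this]

end IsSingleCycle

namespace PadicInt

theorem padMod_eq_toZModPow (n : ℕ) : padMod n = toZModPow (p := 2) n := rfl

theorem val_padMod (n : ℕ) (x : ℤ_[2]) : (padMod n x).val = x.appr n := by
  rw [padMod, ZMod.val_natCast, Nat.mod_eq_of_lt (x.appr_lt n)]

theorem padMod_eq_iff_appr_eq {n : ℕ} {x y : ℤ_[2]} :
    padMod n x = padMod n y ↔ x.appr n = y.appr n := by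
  rw [← val_padMod, ← val_padMod, (ZMod.val_injective _).eq_iff]

theorem padMod_natCast (n v : ℕ) : padMod n (v : ℤ_[2]) = v := map_natCast (toZModPow n) v

theorem padMod_natCast_val (n : ℕ) (a : ZMod (2 ^ n)) : padMod n (a.val : ℤ_[2]) = a := by
  rw [padMod_natCast, ZMod.natCast_zmod_val]

theorem padMod_pow_mul (M t : ℕ) (y : ℤ_[2]) :
    padMod (M + t) (2 ^ M * y) = ((2 ^ M * y.appr t : ℕ) : ZMod (2 ^ (M + t))) := by
  rw [padMod_eq_toZModPow, ← sub_eq_zero, ← map_natCast (toZModPow (M + t)), ← map_sub,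
    ← RingHom.mem_ker, ker_toZModPow]
  obtain ⟨c, hc⟩ := Ideal.mem_span_singleton'.1 (appr_spec t y)
  refine Ideal.mem_span_singleton'.2 ⟨c, ?_⟩
  push_cast
  rw [← mul_sub, ← hc]
  ring

theorem appr_natCast_add_pow_mul {M z : ℕ} (hz : z < 2 ^ M) (t : ℕ) (y : ℤ_[2]) :
    ((z : ℤ_[2]) + 2 ^ M * y).appr (M + t) = z + 2 ^ M * y.appr t := by
  have hlt : z + 2 ^ M * y.appr t < 2 ^ (M + t) :=
    pow_add 2 M t ▸ Nat.add_mul_lt_mul_of_lt_of_lt hz (y.appr_lt t)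
  rw [← val_padMod, padMod_eq_toZModPow, map_add, map_natCast, ← padMod_eq_toZModPow,
    padMod_pow_mul, ← Nat.cast_add, ZMod.val_natCast, Nat.mod_eq_of_lt hlt]

theorem appr_mod_pow (x : ℤ_[2]) {m n : ℕ} (h : m ≤ n) : x.appr n % 2 ^ m = x.appr m := by
  obtain ⟨c, hc⟩ := dvd_appr_sub_appr x m n h
  have := x.appr_mono h
  rw [show x.appr n = x.appr m + 2 ^ m * c by omega, Nat.add_mul_mod_self_left,
    Nat.mod_eq_of_lt (x.appr_lt m)]

theorem val_bit2 (n : ℕ) (x : ℤ_[2]) : (bit2 n x).val = x.appr (n + 1) / 2 ^ n := by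
  have : x.appr (n + 1) / 2 ^ n < 2 :=
    Nat.div_lt_of_lt_mul ((x.appr_lt (n + 1)).trans_eq (pow_succ 2 n))
  rw [bit2, ZMod.val_natCast, Nat.mod_eq_of_lt this]

theorem appr_succ (n : ℕ) (x : ℤ_[2]) :
    x.appr (n + 1) = x.appr n + 2 ^ n * (bit2 n x).val := by
  rw [val_bit2, ← appr_mod_pow x n.le_succ, Nat.mod_add_div]

theorem padMod_succ_eq_iff {n : ℕ} {x y : ℤ_[2]} :
    padMod (n + 1) x = padMod (n + 1) y ↔ padMod n x = padMod n y ∧ bit2 n x = bit2 n y := by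
  simp only [padMod_eq_iff_appr_eq]
  constructor
  · intro h
    rw [bit2, bit2, ← appr_mod_pow x n.le_succ, ← appr_mod_pow y n.le_succ, h]
    exact ⟨rfl, rfl⟩
  · rintro ⟨hlow, hbit⟩
    rw [appr_succ, appr_succ, hlow, hbit]

theorem padMod_eq_iff_forall_bit2_eq {n : ℕ} {x y : ℤ_[2]} :
    padMod n x = padMod n y ↔ ∀ i < n, bit2 i x = bit2 i y := by
  induction n with
  | zero => exact iff_of_true rfl fun i hi => absurd hi i.not_lt_zero
  | succ n ih => rw [padMod_succ_eq_iff, ih, Nat.forall_lt_succ_right]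

theorem bit2_natCast_add_pow_mul {M z : ℕ} (hz : z < 2 ^ M) (t : ℕ) (y : ℤ_[2]) :
    bit2 (M + t) ((z : ℤ_[2]) + 2 ^ M * y) = bit2 t y := by
  rw [bit2, bit2, add_assoc, appr_natCast_add_pow_mul hz, pow_add, ← Nat.div_div_eq_div_mul,
    Nat.add_mul_div_left _ _ (by positivity), Nat.div_eq_of_lt hz, zero_add]

theorem exists_eq_val_add_pow_mul (M : ℕ) (x : ℤ_[2]) :
    ∃ (z : ZMod (2 ^ M)) (y : ℤ_[2]), x = (z.val : ℤ_[2]) + 2 ^ M * y := by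
  obtain ⟨y, hy⟩ := Ideal.mem_span_singleton'.1 (appr_spec M x)
  exact ⟨padMod M x, y, by rw [val_padMod]; push_cast at hy; linear_combination -hy⟩

theorem padMod_val_add_pow_mul_eq_iff {M t : ℕ} {z z' : ZMod (2 ^ M)} {y y' : ℤ_[2]} :
    padMod (M + t) ((z.val : ℤ_[2]) + 2 ^ M * y) = padMod (M + t) ((z'.val : ℤ_[2]) + 2 ^ M * y')
      ↔ z = z' ∧ padMod t y = padMod t y' := by
  rw [padMod_eq_iff_appr_eq, padMod_eq_iff_appr_eq, appr_natCast_add_pow_mul (ZMod.val_lt z),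
    appr_natCast_add_pow_mul (ZMod.val_lt z'),
    Nat.add_mul_eq_add_mul_iff_of_lt (ZMod.val_lt z) (ZMod.val_lt z'), (ZMod.val_injective _).eq_iff]

theorem padMod_congr_of_bit2_eq_add {f : ℤ_[2] → ℤ_[2]} {r : ℕ → ℤ_[2] → ZMod 2}
    (hf : ∀ i x, bit2 i (f x) = bit2 i x + r i x)
    (hr : ∀ i x y, (∀ s < i, bit2 s x = bit2 s y) → r i x = r i y)
    {t : ℕ} {y y' : ℤ_[2]} (h : padMod t y = padMod t y') : padMod t (f y) = padMod t (f y') := by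
  rw [padMod_eq_iff_forall_bit2_eq] at h ⊢
  intro i hi
  rw [hf, hf, h i hi, hr i y y' fun s hs => h s (hs.trans hi)]

end PadicInt

theorem IsSingleCycle.inducedMap_succ {W : ℤ_[2] → ℤ_[2]} {n : ℕ}
    (hcongr : ∀ x y, padMod n x = padMod n y → padMod n (W x) = padMod n (W y))
    {β : ZMod (2 ^ n) → ZMod 2} (hβ : ∀ x, bit2 n (W x) = bit2 n x + β (padMod n x))
    (hβsum : ∑ a, β a = 1) (hg : IsSingleCycle (inducedMap n W)) :
    IsSingleCycle (inducedMap (n + 1) W) := by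
  -- `e` conjugates `inducedMap (n + 1) W` to the skew product of `inducedMap n W` by `β`
  set e : ZMod (2 ^ (n + 1)) → ZMod (2 ^ n) × ZMod 2 := fun a => (padMod n a.val, bit2 n a.val)
  have he : ∀ y, e (padMod (n + 1) y) = (padMod n y, bit2 n y) := fun y =>
    Prod.ext_iff.2 (padMod_succ_eq_iff.1 (padMod_natCast_val _ _))
  refine (hg.skewProduct hβsum).of_semiconj (e := e) (fun a b hab => ?_) fun a => ?_
  · rw [← padMod_natCast_val _ a, ← padMod_natCast_val _ b, padMod_succ_eq_iff]
    exact Prod.ext_iff.1 hab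
  · change e (padMod (n + 1) (W a.val)) =
      (padMod n (W (padMod n a.val).val), bit2 n a.val + β (padMod n a.val))
    rw [he, hβ, hcongr _ _ (padMod_natCast_val _ _).symm]

-- for the `W` of `wreath_product_lifting` and `n = M + t` this is `ρ t (a mod 2 ^ M) ⌊a / 2 ^ M⌋`
noncomputable def bitIncrement (W : ℤ_[2] → ℤ_[2]) (n : ℕ) (a : ZMod (2 ^ n)) : ZMod 2 :=
  bit2 n (W a.val) - bit2 n a.val

section WreathProduct

variable {M : ℕ} {T : ZMod (2 ^ M) → ZMod (2 ^ M)} {H : ZMod (2 ^ M) → ℤ_[2] → ℤ_[2]}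
  {ρ : ℕ → ZMod (2 ^ M) → ℤ_[2] → ZMod 2} {W : ℤ_[2] → ℤ_[2]}

variable
  (h1 : ∀ i z x, bit2 i (H z x) = bit2 i x + ρ i z x)
  (h1' : ∀ i z x y, (∀ s < i, bit2 s x = bit2 s y) → ρ i z x = ρ i z y)
  (hW : ∀ z y, W ((z.val : ℤ_[2]) + 2 ^ M * y) = ((T z).val : ℤ_[2]) + 2 ^ M * H z y)

include hW in
theorem inducedMap_eq_of_wreath : inducedMap M W = T := by
  funext a
  have hWa := hW a 0
  rw [mul_zero, add_zero] at hWa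
  rw [inducedMap, hWa]
  apply ZMod.val_injective
  rw [val_padMod]
  simpa only [appr, mul_zero, add_zero] using appr_natCast_add_pow_mul (ZMod.val_lt (T a)) 0 (H a 0)

include h1 hW in
theorem bit2_wreath (t : ℕ) (z : ZMod (2 ^ M)) (y : ℤ_[2]) :
    bit2 (M + t) (W ((z.val : ℤ_[2]) + 2 ^ M * y)) =
      bit2 (M + t) ((z.val : ℤ_[2]) + 2 ^ M * y) + ρ t z y := by
  rw [hW, bit2_natCast_add_pow_mul (ZMod.val_lt _), bit2_natCast_add_pow_mul (ZMod.val_lt _), h1]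

include h1 h1' hW in
theorem padMod_wreath_congr {k : ℕ} (hk : M ≤ k) {x x' : ℤ_[2]} (h : padMod k x = padMod k x') :
    padMod k (W x) = padMod k (W x') := by
  obtain ⟨t, rfl⟩ := Nat.exists_eq_add_of_le hk
  obtain ⟨z, y, rfl⟩ := exists_eq_val_add_pow_mul M x
  obtain ⟨z', y', rfl⟩ := exists_eq_val_add_pow_mul M x'
  obtain ⟨rfl, hy⟩ := padMod_val_add_pow_mul_eq_iff.1 h
  rw [hW, hW]
  exact padMod_val_add_pow_mul_eq_iff.2 ⟨rfl, padMod_congr_of_bit2_eq_add (h1 · z) (h1' · z) hy⟩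

include h1 h1' hW in
theorem bit2_wreath_eq_add_bitIncrement {n : ℕ} (hn : M ≤ n) (x : ℤ_[2]) :
    bit2 n (W x) = bit2 n x + bitIncrement W n (padMod n x) := by
  obtain ⟨t, rfl⟩ := Nat.exists_eq_add_of_le hn
  have hcongr : ∀ x x', padMod (M + t) x = padMod (M + t) x' →
      bit2 (M + t) (W x) - bit2 (M + t) x = bit2 (M + t) (W x') - bit2 (M + t) x' := by
    intro x x' h
    obtain ⟨z, y, rfl⟩ := exists_eq_val_add_pow_mul M x
    obtain ⟨z', y', rfl⟩ := exists_eq_val_add_pow_mul M x'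
    obtain ⟨rfl, hy⟩ := padMod_val_add_pow_mul_eq_iff.1 h
    rw [bit2_wreath h1 hW, bit2_wreath h1 hW, add_sub_cancel_left, add_sub_cancel_left]
    exact h1' t z y y' (padMod_eq_iff_forall_bit2_eq.1 hy)
  rw [bitIncrement, ← hcongr x _ (padMod_natCast_val _ _).symm]
  ring

include h1 hW in
theorem sum_bitIncrement
    (h2 : ∑ z : Fin (2 ^ M), ρ 0 (((z : ℕ) : ZMod (2 ^ M))) 0 = 1)
    (h3 : ∀ i : ℕ, 1 ≤ i →
      ∑ z : Fin (2 ^ M), ∑ x : Fin (2 ^ i), ρ i (((z : ℕ) : ZMod (2 ^ M))) (((x : ℕ) : ℤ_[2])) = 1)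
    {n : ℕ} (hn : M ≤ n) :
    ∑ a, bitIncrement W n a = 1 := by
  obtain ⟨t, rfl⟩ := Nat.exists_eq_add_of_le hn
  have hterm : ∀ (z : Fin (2 ^ M)) (x : Fin (2 ^ t)),
      bitIncrement W (M + t) ((z + 2 ^ M * x : ℕ) : ZMod (2 ^ (M + t))) =
        ρ t ((z : ℕ) : ZMod (2 ^ M)) ((x : ℕ) : ℤ_[2]) := by
    intro z x
    have hval : ((z + 2 ^ M * x : ℕ) : ZMod (2 ^ (M + t))).val =
        ((z : ℕ) : ZMod (2 ^ M)).val + 2 ^ M * x := by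
      rw [ZMod.val_natCast_of_lt z.isLt, ZMod.val_natCast_of_lt
        (pow_add 2 M t ▸ Nat.add_mul_lt_mul_of_lt_of_lt z.isLt x.isLt)]
    rw [bitIncrement, hval, Nat.cast_add, Nat.cast_mul, Nat.cast_pow, Nat.cast_ofNat,
      bit2_wreath h1 hW, add_sub_cancel_left]
  rw [ZMod.sum_eq_sum_fin_add_mul (pow_add 2 M t).symm]
  simp only [hterm]
  rcases t with _ | t
  · simpa using h2
  · exact h3 (t + 1) t.succ_pos

end WreathProduct

theorem wreath_product_lifting_general (M : ℕ)
    (T : ZMod (2^M) → ZMod (2^M)) (hT : IsSingleCycle T)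
    (H : ZMod (2^M) → ℤ_[2] → ℤ_[2])
    (ρ : ℕ → ZMod (2^M) → ℤ_[2] → ZMod 2)
    (h1 : ∀ (i : ℕ) (z : ZMod (2^M)) (x : ℤ_[2]),
      bit2 i (H z x) = bit2 i x + ρ i z x)
    (h1' : ∀ (i : ℕ) (z : ZMod (2^M)) (x y : ℤ_[2]),
      (∀ s : ℕ, s < i → bit2 s x = bit2 s y) → ρ i z x = ρ i z y)
    (h2 : ∑ z : Fin (2^M), ρ 0 (((z : ℕ) : ZMod (2^M))) 0 = 1)
    (h3 : ∀ i : ℕ, 1 ≤ i →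
      ∑ z : Fin (2^M), ∑ x : Fin (2^i),
        ρ i (((z : ℕ) : ZMod (2^M))) (((x : ℕ) : ℤ_[2])) = 1)
    (W : ℤ_[2] → ℤ_[2])
    (hW : ∀ (z : ZMod (2^M)) (y : ℤ_[2]),
      W ((z.val : ℤ_[2]) + 2^M * y) = ((T z).val : ℤ_[2]) + 2^M * H z y) :
    ∀ k : ℕ, M ≤ k → IsSingleCycle (inducedMap k W) := by
  intro k hk
  induction k, hk using Nat.le_induction with
  | base => rwa [inducedMap_eq_of_wreath hW]
  | succ n hn ih =>
    exact ih.inducedMap_succ (fun _ _ => padMod_wreath_congr h1 h1' hW hn)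
      (bit2_wreath_eq_add_bitIncrement h1 h1' hW hn) (sum_bitIncrement h1 hW h2 h3 hn)

/-- wreath-product lifting: if `T` is a single-cycle permutation
of `Z/2^M`, the family `H_z` satisfies `δ_i(H_z x) = δ_i(x) + ρ_i(z;x)` with
`ρ_i(z;·)` depending only on bits `< i` of `x`, `∑_z ρ_0(z) ≡ 1 (mod 2)`, and
`∑_z ∑_{x<2^i} ρ_i(z;x) ≡ 1 (mod 2)` for `i ≥ 1`, then
`W(x) = T(x mod 2^M) + 2^M·H_{x mod 2^M}(⌊x/2^M⌋)` is transitive modulo `2^k`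
for every `k ≥ M`. -/
theorem wreath_product_lifting (M : ℕ) (hM : 1 ≤ M)
    (T : ZMod (2^M) → ZMod (2^M)) (hTb : Function.Bijective T) (hT : IsSingleCycle T)
    (H : ZMod (2^M) → ℤ_[2] → ℤ_[2])
    (ρ : ℕ → ZMod (2^M) → ℤ_[2] → ZMod 2)
    (h1 : ∀ (i : ℕ) (z : ZMod (2^M)) (x : ℤ_[2]),
      bit2 i (H z x) = bit2 i x + ρ i z x)
    (h1' : ∀ (i : ℕ) (z : ZMod (2^M)) (x y : ℤ_[2]),
      (∀ s : ℕ, s < i → bit2 s x = bit2 s y) → ρ i z x = ρ i z y)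
    (h2 : ∑ z : Fin (2^M), ρ 0 (((z : ℕ) : ZMod (2^M))) 0 = 1)
    (h3 : ∀ i : ℕ, 1 ≤ i →
      ∑ z : Fin (2^M), ∑ x : Fin (2^i),
        ρ i (((z : ℕ) : ZMod (2^M))) (((x : ℕ) : ℤ_[2])) = 1)
    (W : ℤ_[2] → ℤ_[2])
    (hW : ∀ (z : ZMod (2^M)) (y : ℤ_[2]),
      W ((z.val : ℤ_[2]) + 2^M * y) = ((T z).val : ℤ_[2]) + 2^M * H z y) :
    ∀ k : ℕ, M ≤ k → IsSingleCycle (inducedMap k W) :=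
  wreath_product_lifting_general M T hT H ρ h1 h1' h2 h3 W hW
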